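/- Let K be an algebraically closed field and let a, b, c, d ∈ K be such that the polynomial P = a•x²y + b•y²z + c•z²x + d•xyz in MvPolynomial (Fin 3) K is nonzero. If P is not irreducible in MvPolynomial (Fin 3) K, then a*b*c = 0. -/

import Mathlib

/-!
Assume `a b c ≠ 0`. Viewed as a quadratic in `x` over `K[y, z]`, the cubic is
`(a y) x² + (c z² + d y z) x + b y² z`, which is Eisenstein at the prime `z`: `z ∤ a y`,
`z` divides the two lower coefficients and `z² ∤ b y² z`. It is primitive, since the only
non-unit divisors of the leading coefficient `a y` are associates of `y`, and `y ∤ c z² + d y z`.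
-/

open MvPolynomial

namespace MvPolynomial

variable {σ R : Type*}

theorem X_dvd_C_mul_X_pow_iff [CommSemiring R] {i j : σ} (hij : j ≠ i) (r : R) (m : ℕ) :
    X i ∣ C r * X j ^ m ↔ r = 0 := by
  simp [C_mul_X_pow_eq_monomial, hij]

end MvPolynomial

section CyclicCubic

variable {R : Type*}

noncomputable def cyclicCubic [CommSemiring R] (a b c d : R) : MvPolynomial (Fin 3) R :=
  a • (X 0 ^ 2 * X 1) + b • (X 1 ^ 2 * X 2) + c • (X 2 ^ 2 * X 0) + d • (X 0 * X 1 * X 2)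

/-- As in `finSuccEquiv`, `y` and `z` become `X 0` and `X 1` of the coefficient ring. -/
noncomputable def cyclicCubicInX [CommSemiring R] (a b c d : R) :
    Polynomial (MvPolynomial (Fin 2) R) :=
  Polynomial.C (C a * X 0) * Polynomial.X ^ 2 +
    Polynomial.C (C c * X 1 ^ 2 + C d * (X 0 * X 1)) * Polynomial.X +
    Polynomial.C (C b * (X 0 ^ 2 * X 1))

theorem finSuccEquiv_cyclicCubic [CommSemiring R] (a b c d : R) :
    finSuccEquiv R 2 (cyclicCubic a b c d) = cyclicCubicInX a b c d := by
  have hC (r : R) : finSuccEquiv R 2 (C r) = Polynomial.C (C r) := by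
    simp [finSuccEquiv_apply]
  simp only [cyclicCubic, cyclicCubicInX, smul_eq_C_mul, map_add, map_mul, map_pow, hC,
    finSuccEquiv_X_zero, show (X 1 : MvPolynomial (Fin 3) R) = X (Fin.succ 0) from rfl,
    show (X 2 : MvPolynomial (Fin 3) R) = X (Fin.succ 1) from rfl, finSuccEquiv_X_succ]
  ring

section Coeff

variable [CommSemiring R] (a b c d : R)

@[simp]
theorem cyclicCubicInX_coeff_zero :
    (cyclicCubicInX a b c d).coeff 0 = C b * (X 0 ^ 2 * X 1) := by
  simp only [cyclicCubicInX, Polynomial.coeff_add, Polynomial.coeff_C_mul_X_pow,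
    Polynomial.coeff_C_mul_X, Polynomial.coeff_C]
  norm_num

@[simp]
theorem cyclicCubicInX_coeff_one :
    (cyclicCubicInX a b c d).coeff 1 = C c * X 1 ^ 2 + C d * (X 0 * X 1) := by
  simp only [cyclicCubicInX, Polynomial.coeff_add, Polynomial.coeff_C_mul_X_pow,
    Polynomial.coeff_C_mul_X, Polynomial.coeff_C]
  norm_num

@[simp]
theorem cyclicCubicInX_coeff_two :
    (cyclicCubicInX a b c d).coeff 2 = C a * X 0 := by
  simp only [cyclicCubicInX, Polynomial.coeff_add, Polynomial.coeff_C_mul_X_pow,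
    Polynomial.coeff_C_mul_X, Polynomial.coeff_C]
  norm_num

end Coeff

variable [CommRing R] [IsDomain R]

theorem cyclicCubicInX_natDegree {a : R} (b c d : R) (ha : a ≠ 0) :
    (cyclicCubicInX a b c d).natDegree = 2 :=
  Polynomial.natDegree_quadratic (mul_ne_zero (C_ne_zero.mpr ha) (X_ne_zero 0))

theorem cyclicCubicInX_isEisensteinAt {a b : R} (c d : R) (ha : a ≠ 0) (hb : b ≠ 0) :
    (cyclicCubicInX a b c d).IsEisensteinAt (Ideal.span {X 1}) := by
  have hdeg := cyclicCubicInX_natDegree b c d ha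
  refine ⟨?_, fun {n} hn => ?_, ?_⟩
  · rw [Polynomial.leadingCoeff, hdeg, cyclicCubicInX_coeff_two, Ideal.mem_span_singleton,
      ← pow_one (X 0), X_dvd_C_mul_X_pow_iff (by decide)]
    exact ha
  · rw [hdeg] at hn
    rw [Ideal.mem_span_singleton]
    interval_cases n
    · exact ⟨C b * X 0 ^ 2, by rw [cyclicCubicInX_coeff_zero]; ring⟩
    · exact ⟨C c * X 1 + C d * X 0, by rw [cyclicCubicInX_coeff_one]; ring⟩
  · rw [cyclicCubicInX_coeff_zero, Ideal.span_singleton_pow, Ideal.mem_span_singleton]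
    rintro ⟨s, hs⟩
    have hbs : C b * X 0 ^ 2 = X 1 * s :=
      mul_left_cancel₀ (X_ne_zero 1) (by linear_combination hs)
    exact hb ((X_dvd_C_mul_X_pow_iff (by decide) b 2).mp ⟨s, hbs⟩)

end CyclicCubic

section Field

variable {K : Type*} [Field K]

theorem cyclicCubicInX_isPrimitive {a c : K} (b d : K) (ha : a ≠ 0) (hc : c ≠ 0) :
    (cyclicCubicInX a b c d).IsPrimitive := by
  intro r hr
  have hr2 : r ∣ C a * X 0 := by
    simpa only [cyclicCubicInX_coeff_two] using (Polynomial.C_dvd_iff_dvd_coeff r _).mp hr 2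
  have hr1 : r ∣ C c * X 1 ^ 2 + C d * (X 0 * X 1) := by
    simpa only [cyclicCubicInX_coeff_one] using (Polynomial.C_dvd_iff_dvd_coeff r _).mp hr 1
  have hirr : Irreducible (C a * X 0 : MvPolynomial (Fin 2) K) :=
    ((associated_unit_mul_left _ _ ((isUnit_iff_ne_zero.mpr ha).map C)).irreducible_iff).mpr
      X_prime.irreducible
  refine (hirr.dvd_iff.mp hr2).resolve_right fun hassoc => hc ?_
  have hX0 : (X 0 : MvPolynomial (Fin 2) K) ∣ C c * X 1 ^ 2 + C d * (X 0 * X 1) :=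
    (dvd_mul_left (X 0 : MvPolynomial (Fin 2) K) (C a)).trans (hassoc.dvd.trans hr1)
  rw [← X_dvd_C_mul_X_pow_iff (by decide : (1 : Fin 2) ≠ 0) c 2]
  exact (dvd_add_left (dvd_mul_of_dvd_right (dvd_mul_right _ (X 1)) (C d))).mp hX0

theorem irreducible_cyclicCubic {a b c : K} (d : K) (ha : a ≠ 0) (hb : b ≠ 0) (hc : c ≠ 0) :
    Irreducible (cyclicCubic a b c d) := by
  have h : Irreducible (cyclicCubicInX a b c d) :=
    (cyclicCubicInX_isEisensteinAt c d ha hb).irreducible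
      ((Ideal.span_singleton_prime (X_ne_zero 1)).mpr X_prime)
      (cyclicCubicInX_isPrimitive b d ha hc) (by rw [cyclicCubicInX_natDegree b c d ha]; norm_num)
  rw [← finSuccEquiv_cyclicCubic] at h
  exact (MulEquiv.irreducible_iff (finSuccEquiv K 2).toMulEquiv).mp h

end Field

theorem stmt_2 (K : Type*) [Field K] (a b c d : K)
    (hirr : ¬ Irreducible (a • (X 0 ^ 2 * X 1) + b • (X 1 ^ 2 * X 2) +
            c • (X 2 ^ 2 * X 0) + d • (X 0 * X 1 * X 2) : MvPolynomial (Fin 3) K)) :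
    a * b * c = 0 := by
  by_contra habc
  simp only [mul_eq_zero, not_or] at habc
  obtain ⟨⟨ha, hb⟩, hc⟩ := habc
  exact hirr (irreducible_cyclicCubic d ha hb hc)
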